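/- Let γ : [0,∞) → [0,∞) be a non-decreasing concave function and suppose that for some -1 < p₁ < p₂ with p₁, p₂ ≠ 0 one has Φ_γ(p₁) = Φ_γ(p₂), where Φ_γ(p) = ( (1/Γ(1+p)) ∫₀^∞ γ(r)^p e^{-r} dr )^{1/p}. Then γ is linear, i.e., γ(r) = c·r for some constant c ≥ 0, and Φ_γ is constant on (-1,∞)\{0}. -/

import Mathlib

open Real MeasureTheory Set Filter Topology

/-!
Put `c = Φ_γ(p₂)`. Then the moments `∫ γ(r)^p e^{-r} dr` at `p = p₁, p₂` coincide with those of
the line `ℓ(r) = c r`, for which `Φ_ℓ ≡ c`. Concavity and `γ(0) ≥ 0` make `γ(r)/r` non-increasing,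
so `γ - ℓ` changes sign at most once, say at `r₀`, and then monotonicity puts `γ(r)` between `c r`
and `t = c r₀`. Since `x ↦ x^{p₁}/p₁ - t^{p₁-p₂} x^{p₂}/p₂` increases on `(0, t]` and decreases on
`[t, ∞)`, it is larger at `γ(r)` than at `c r` unless the two agree; but both sides have the same
integral against `e^{-r}`, so `γ = ℓ`. If `γ - ℓ` has constant sign, `x^{p₁}/p₁` or `x^{p₂}/p₂`
alone does the same job.
-/
theorem hasDerivAt_rpow_div_self {p x : ℝ} (hp : p ≠ 0) (hx : 0 < x) :
    HasDerivAt (fun x => x ^ p / p) (x ^ (p - 1)) x :=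
  ((hasDerivAt_rpow_const (Or.inl hx.ne')).div_const p).congr_deriv (by field_simp)

theorem strictMonoOn_rpow_div_self {p : ℝ} (hp : p ≠ 0) :
    StrictMonoOn (fun x : ℝ => x ^ p / p) (Ioi 0) := by
  refine strictMonoOn_of_deriv_pos (convex_Ioi 0)
    (fun x hx => (hasDerivAt_rpow_div_self hp hx).continuousAt.continuousWithinAt) ?_
  intro x hx
  rw [interior_Ioi] at hx
  rw [(hasDerivAt_rpow_div_self hp hx).deriv]
  exact rpow_pos_of_pos hx _

noncomputable def rpowPeak (p q t x : ℝ) : ℝ := x ^ p / p - t ^ (p - q) * (x ^ q / q)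

section rpowPeak

variable {p q t : ℝ}

theorem hasDerivAt_rpowPeak (hp : p ≠ 0) (hq : q ≠ 0) {x : ℝ} (hx : 0 < x) :
    HasDerivAt (rpowPeak p q t) (x ^ (q - 1) * (x ^ (p - q) - t ^ (p - q))) x := by
  refine ((hasDerivAt_rpow_div_self hp hx).sub
    ((hasDerivAt_rpow_div_self hq hx).const_mul (t ^ (p - q)))).congr_deriv ?_
  rw [mul_sub, ← rpow_add hx]
  ring_nf

theorem rpowPeak_strictMonoOn (hp : p ≠ 0) (hq : q ≠ 0) (hpq : p < q) :
    StrictMonoOn (rpowPeak p q t) (Ioc 0 t) := by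
  refine strictMonoOn_of_deriv_pos (convex_Ioc 0 t)
    (fun x hx => (hasDerivAt_rpowPeak hp hq hx.1).continuousAt.continuousWithinAt) ?_
  intro x hx
  rw [interior_Ioc] at hx
  rw [(hasDerivAt_rpowPeak hp hq hx.1).deriv]
  exact mul_pos (rpow_pos_of_pos hx.1 _)
    (sub_pos.2 (rpow_lt_rpow_of_neg hx.1 hx.2 (sub_neg.2 hpq)))

theorem rpowPeak_strictAntiOn (hp : p ≠ 0) (hq : q ≠ 0) (hpq : p < q) (ht : 0 < t) :
    StrictAntiOn (rpowPeak p q t) (Ici t) := by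
  refine strictAntiOn_of_deriv_neg (convex_Ici t)
    (fun x hx => (hasDerivAt_rpowPeak hp hq (ht.trans_le hx)).continuousAt.continuousWithinAt) ?_
  intro x hx
  rw [interior_Ici] at hx
  rw [(hasDerivAt_rpowPeak hp hq (ht.trans hx)).deriv]
  exact mul_neg_of_pos_of_neg (rpow_pos_of_pos (ht.trans hx) _)
    (sub_neg.2 (rpow_lt_rpow_of_neg ht hx (sub_neg.2 hpq)))

theorem rpowPeak_lt_of_mem_uIcc (hp : p ≠ 0) (hq : q ≠ 0) (hpq : p < q) (ht : 0 < t)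
    {x y : ℝ} (hy : 0 < y) (hx : x ∈ uIcc y t) (hxy : x ≠ y) :
    rpowPeak p q t y < rpowPeak p q t x := by
  rcases mem_uIcc.1 hx with ⟨hyx, hxt⟩ | ⟨htx, hxy'⟩
  · exact rpowPeak_strictMonoOn hp hq hpq ⟨hy, (hyx.trans hxt)⟩ ⟨hy.trans_le hyx, hxt⟩
      (hyx.lt_of_ne' hxy)
  · exact rpowPeak_strictAntiOn hp hq hpq ht htx (htx.trans hxy') (hxy'.lt_of_ne hxy)

end rpowPeak

theorem eqOn_zero_of_setIntegral_eq_zero {X : Type*} [TopologicalSpace X] [MeasurableSpace X]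
    [OpensMeasurableSpace X] {μ : Measure X} [μ.IsOpenPosMeasure] {U : Set X} {f : X → ℝ}
    (hU : IsOpen U) (hf : ContinuousOn f U) (hnn : ∀ x ∈ U, 0 ≤ f x) (hi : IntegrableOn f U μ)
    (h0 : ∫ x in U, f x ∂μ = 0) : EqOn f 0 U := by
  have hnn' : 0 ≤ᵐ[μ.restrict U] f := (ae_restrict_iff' hU.measurableSet).2 (ae_of_all _ hnn)
  exact Measure.eqOn_open_of_ae_eq ((integral_eq_zero_iff_of_nonneg_ae hnn' hi).1 h0) hU hf
    continuousOn_const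

noncomputable def expMoment (γ : ℝ → ℝ) (p : ℝ) : ℝ := ∫ r in Ioi 0, γ r ^ p * exp (-r)

noncomputable def berwaldPhi (γ : ℝ → ℝ) (p : ℝ) : ℝ :=
  (1 / Gamma (1 + p) * expMoment γ p) ^ (1 / p)

section moments

variable {γ : ℝ → ℝ} {c p : ℝ}

theorem const_mul_rpow_mul_exp_eqOn (hc : 0 ≤ c) :
    EqOn (fun r => (c * r) ^ p * exp (-r)) (fun r => c ^ p * (exp (-r) * r ^ (1 + p - 1)))
      (Ioi 0) := by
  intro r hr
  simp only [mul_rpow hc (le_of_lt hr), add_sub_cancel_left]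
  ring

theorem integrableOn_const_mul_rpow_mul_exp (hc : 0 ≤ c) (hp : -1 < p) :
    IntegrableOn (fun r => (c * r) ^ p * exp (-r)) (Ioi 0) :=
  IntegrableOn.congr_fun ((GammaIntegral_convergent (s := 1 + p) (by linarith)).const_mul _)
    (const_mul_rpow_mul_exp_eqOn hc).symm measurableSet_Ioi

theorem expMoment_const_mul (hc : 0 ≤ c) (hp : -1 < p) :
    expMoment (c * ·) p = c ^ p * Gamma (1 + p) := by
  rw [expMoment, setIntegral_congr_fun measurableSet_Ioi (const_mul_rpow_mul_exp_eqOn hc),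
    integral_const_mul, Gamma_eq_integral (by linarith)]

theorem berwaldPhi_const_mul (hc : 0 ≤ c) (hp : -1 < p) (hp0 : p ≠ 0) :
    berwaldPhi (c * ·) p = c := by
  have hΓ : Gamma (1 + p) ≠ 0 := (Gamma_pos_of_pos (by linarith)).ne'
  rw [berwaldPhi, expMoment_const_mul hc hp, one_div_mul_eq_div, mul_div_cancel_right₀ _ hΓ,
    one_div, rpow_rpow_inv hc hp0]

theorem berwaldPhi_congr {ℓ : ℝ → ℝ} (h : EqOn γ ℓ (Ioi 0)) :
    berwaldPhi γ p = berwaldPhi ℓ p := by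
  rw [berwaldPhi, berwaldPhi, expMoment, expMoment,
    setIntegral_congr_fun measurableSet_Ioi fun r hr => by rw [h hr]]

theorem expMoment_eq_berwaldPhi_rpow (hγ : ∀ r ∈ Ioi 0, 0 ≤ γ r) (hp : -1 < p) (hp0 : p ≠ 0) :
    expMoment γ p = berwaldPhi γ p ^ p * Gamma (1 + p) := by
  have hΓ : 0 < Gamma (1 + p) := Gamma_pos_of_pos (by linarith)
  have hM : 0 ≤ expMoment γ p := setIntegral_nonneg measurableSet_Ioi fun r hr =>
    mul_nonneg (rpow_nonneg (hγ r hr) _) (exp_pos _).le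
  rw [berwaldPhi, one_div p, rpow_inv_rpow (by positivity) hp0]
  field_simp

theorem expMoment_pos (hγ : ∀ r ∈ Ioi 0, 0 < γ r)
    (hi : IntegrableOn (fun r => γ r ^ p * exp (-r)) (Ioi 0)) : 0 < expMoment γ p := by
  have hpos : ∀ r ∈ Ioi (0 : ℝ), 0 < γ r ^ p * exp (-r) := fun r hr =>
    mul_pos (rpow_pos_of_pos (hγ r hr) _) (exp_pos _)
  rw [expMoment, setIntegral_pos_iff_support_of_nonneg_ae
    ((ae_restrict_iff' measurableSet_Ioi).2 (ae_of_all _ fun r hr => (hpos r hr).le)) hi]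
  calc (0 : ENNReal) < volume (Ioi (0 : ℝ)) := by simp
    _ ≤ volume (Function.support _ ∩ Ioi 0) :=
      measure_mono fun r hr => ⟨(hpos r hr).ne', hr⟩

theorem berwaldPhi_pos (hγ : ∀ r ∈ Ioi 0, 0 < γ r) (hp : -1 < p)
    (hi : IntegrableOn (fun r => γ r ^ p * exp (-r)) (Ioi 0)) : 0 < berwaldPhi γ p :=
  rpow_pos_of_pos (mul_pos (by simpa using Gamma_pos_of_pos (by linarith : 0 < 1 + p))
    (expMoment_pos hγ hi)) _

end moments

section concave

variable {γ : ℝ → ℝ}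

theorem ConcaveOn.antitoneOn_div_self (hconc : ConcaveOn ℝ (Ici 0) γ) (h0 : 0 ≤ γ 0) :
    AntitoneOn (fun r => γ r / r) (Ioi 0) := by
  intro x hx y hy hxy
  have hsec := hconc.neg.secant_mono self_mem_Ici (mem_Ici.2 (le_of_lt hx))
    (mem_Ici.2 (le_of_lt hy)) hx.ne' (ne_of_gt hy) hxy
  have h0' : γ 0 / y ≤ γ 0 / x := div_le_div_of_nonneg_left h0 hx hxy
  simp only [Pi.neg_apply, sub_zero] at hsec
  calc γ y / y = -(-γ y - -γ 0) / y + γ 0 / y := by ring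
    _ ≤ -(-γ x - -γ 0) / x + γ 0 / x := by
      rw [neg_div, neg_div x]
      linarith
    _ = γ x / x := by ring

theorem ConcaveOn.pos_of_pos (hconc : ConcaveOn ℝ (Ici 0) γ) (hmono : MonotoneOn γ (Ici 0))
    (h0 : 0 ≤ γ 0) {s : ℝ} (hs : 0 < s) (hγs : 0 < γ s) : ∀ r ∈ Ioi 0, 0 < γ r := by
  intro r hr
  rcases le_total s r with hsr | hrs
  · exact hγs.trans_le (hmono (mem_Ici.2 hs.le) (mem_Ici.2 (hs.le.trans hsr)) hsr)
  · have := hconc.antitoneOn_div_self h0 hr hs hrs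
    exact (div_pos_iff_of_pos_right hr).1 ((div_pos hγs hs).trans_le this)

theorem MonotoneOn.mem_uIcc_of_antitoneOn_div_self (hmono : MonotoneOn γ (Ici 0))
    (hratio : AntitoneOn (fun r => γ r / r) (Ioi 0)) {c r₀ : ℝ} (hr₀ : 0 < r₀)
    (hγr₀ : γ r₀ = c * r₀) {r : ℝ} (hr : 0 < r) : γ r ∈ uIcc (c * r) (c * r₀) := by
  have hc : c = γ r₀ / r₀ := by rw [hγr₀, mul_div_cancel_right₀ _ hr₀.ne']
  rcases le_total r r₀ with hrr₀ | hr₀r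
  · refine mem_uIcc.2 (Or.inl ⟨?_, hγr₀ ▸ hmono (mem_Ici.2 hr.le) (mem_Ici.2 hr₀.le) hrr₀⟩)
    rw [← le_div_iff₀ hr, hc]
    exact hratio hr hr₀ hrr₀
  · refine mem_uIcc.2 (Or.inr ⟨hγr₀ ▸ hmono (mem_Ici.2 hr₀.le) (mem_Ici.2 hr.le) hr₀r, ?_⟩)
    rw [← div_le_iff₀ hr, hc]
    exact hratio hr₀ hr hr₀r

end concave

theorem IsPreconnected.exists_eq_or_le_or_ge {X : Type*} [TopologicalSpace X] {s : Set X}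
    (hs : IsPreconnected s) {f g : X → ℝ} (hf : ContinuousOn f s) (hg : ContinuousOn g s) :
    (∃ x ∈ s, f x = g x) ∨ (∀ x ∈ s, f x ≤ g x) ∨ (∀ x ∈ s, g x ≤ f x) := by
  by_contra! ⟨hne, ⟨a, ha, hga⟩, ⟨b, hb, hfb⟩⟩
  obtain ⟨x, hx, hfg⟩ := hs.intermediate_value₂ hb ha hf hg hfb.le hga.le
  exact hne x hx hfg

theorem ContinuousOn.rpow_const_mul_exp_neg {f : ℝ → ℝ} {s : Set ℝ} (hf : ContinuousOn f s)
    (hpos : ∀ r ∈ s, 0 < f r) (p : ℝ) : ContinuousOn (fun r => f r ^ p * exp (-r)) s :=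
  (hf.rpow_const fun r hr => Or.inl (hpos r hr).ne').mul (by fun_prop)

theorem eqOn_const_mul_of_moment_comparison {γ : ℝ → ℝ} {c p q a b : ℝ} (hc : 0 < c)
    (hp : -1 < p) (hq : -1 < q)
    (hγ : ContinuousOn γ (Ioi 0)) (hγpos : ∀ r ∈ Ioi 0, 0 < γ r)
    (hip : IntegrableOn (fun r => γ r ^ p * exp (-r)) (Ioi 0))
    (hiq : IntegrableOn (fun r => γ r ^ q * exp (-r)) (Ioi 0))
    (hMp : expMoment γ p = c ^ p * Gamma (1 + p)) (hMq : expMoment γ q = c ^ q * Gamma (1 + q))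
    (hcmp : ∀ r ∈ Ioi 0, γ r ≠ c * r →
      a * (c * r) ^ p + b * (c * r) ^ q < a * γ r ^ p + b * γ r ^ q) :
    EqOn γ (c * ·) (Ioi 0) := by
  set F : ℝ → ℝ := fun r =>
    a * (γ r ^ p * exp (-r) - (c * r) ^ p * exp (-r)) +
      b * (γ r ^ q * exp (-r) - (c * r) ^ q * exp (-r))
  have hF : ∀ r, F r = (a * γ r ^ p + b * γ r ^ q - (a * (c * r) ^ p + b * (c * r) ^ q)) *
      exp (-r) := fun r => by ring
  have hlp := integrableOn_const_mul_rpow_mul_exp hc.le hp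
  have hlq := integrableOn_const_mul_rpow_mul_exp hc.le hq
  have hFnn : ∀ r ∈ Ioi 0, 0 ≤ F r := by
    intro r hr
    rw [hF]
    refine mul_nonneg (sub_nonneg.2 ?_) (exp_pos _).le
    rcases eq_or_ne (γ r) (c * r) with h | h
    · rw [h]
    · exact (hcmp r hr h).le
  have hl : ContinuousOn (c * ·) (Ioi 0) := by fun_prop
  have hlpos : ∀ r ∈ Ioi (0 : ℝ), 0 < c * r := fun r hr => mul_pos hc hr
  have hFcont : ContinuousOn F (Ioi 0) :=
    (continuousOn_const.mul ((hγ.rpow_const_mul_exp_neg hγpos p).sub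
      (hl.rpow_const_mul_exp_neg hlpos p))).add
    (continuousOn_const.mul ((hγ.rpow_const_mul_exp_neg hγpos q).sub
      (hl.rpow_const_mul_exp_neg hlpos q)))
  have hFi : IntegrableOn F (Ioi 0) := ((hip.sub hlp).const_mul a).add ((hiq.sub hlq).const_mul b)
  have hFint : ∫ r in Ioi 0, F r = 0 := by
    simp only [F]
    rw [integral_add, integral_const_mul, integral_const_mul, integral_sub hip hlp,
      integral_sub hiq hlq]
    · change a * (expMoment γ p - expMoment (c * ·) p) +
        b * (expMoment γ q - expMoment (c * ·) q) = 0
      rw [hMp, hMq, expMoment_const_mul hc.le hp, expMoment_const_mul hc.le hq]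
      ring
    · exact (hip.sub hlp).const_mul a
    · exact (hiq.sub hlq).const_mul b
  have hF0 := eqOn_zero_of_setIntegral_eq_zero isOpen_Ioi hFcont hFnn hFi hFint
  intro r hr
  by_contra hne
  have := hF0 hr
  rw [hF, Pi.zero_apply] at this
  exact (mul_pos (sub_pos.2 (hcmp r hr hne)) (exp_pos _)).ne' this

theorem MonotoneOn.apply_zero_eq_zero {γ : ℝ → ℝ} {c : ℝ} (hmono : MonotoneOn γ (Ici 0))
    (h0 : 0 ≤ γ 0) (hγc : EqOn γ (c * ·) (Ioi 0)) : γ 0 = 0 := by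
  have hlim : Tendsto (c * ·) (𝓝[>] 0) (𝓝 0) :=
    ((continuous_const_mul c).tendsto' 0 0 (mul_zero c)).mono_left nhdsWithin_le_nhds
  refine le_antisymm (ge_of_tendsto hlim (eventually_nhdsWithin_of_forall fun r hr => ?_)) h0
  have := hmono self_mem_Ici (mem_Ici.2 (le_of_lt hr)) (le_of_lt hr)
  rwa [hγc hr] at this

theorem ConcaveOn.eqOn_const_mul_of_expMoment_eq {γ : ℝ → ℝ} {c p q : ℝ}
    (hconc : ConcaveOn ℝ (Ici 0) γ) (hmono : MonotoneOn γ (Ici 0)) (h0 : 0 ≤ γ 0) (hc : 0 < c)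
    (hp : -1 < p) (hpq : p < q) (hp0 : p ≠ 0) (hq0 : q ≠ 0) (hγpos : ∀ r ∈ Ioi 0, 0 < γ r)
    (hip : IntegrableOn (fun r => γ r ^ p * exp (-r)) (Ioi 0))
    (hiq : IntegrableOn (fun r => γ r ^ q * exp (-r)) (Ioi 0))
    (hMp : expMoment γ p = c ^ p * Gamma (1 + p)) (hMq : expMoment γ q = c ^ q * Gamma (1 + q)) :
    EqOn γ (c * ·) (Ioi 0) := by
  have hγ : ContinuousOn γ (Ioi 0) := by simpa using hconc.continuousOn_interior
  have key := fun a b => eqOn_const_mul_of_moment_comparison (a := a) (b := b) hc hp (hp.trans hpq)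
    hγ hγpos hip hiq hMp hMq
  rcases isPreconnected_Ioi.exists_eq_or_le_or_ge hγ (g := (c * ·)) (by fun_prop) with
    ⟨r₀, hr₀, hγr₀⟩ | hle | hge
  · refine key (1 / p) (-((c * r₀) ^ (p - q) / q)) fun r hr hne => ?_
    have := rpowPeak_lt_of_mem_uIcc hp0 hq0 hpq (mul_pos hc hr₀) (mul_pos hc hr)
      (hmono.mem_uIcc_of_antitoneOn_div_self (hconc.antitoneOn_div_self h0) hr₀ hγr₀ hr) hne
    simp only [rpowPeak] at this
    linear_combination this
  · refine key 0 (-(1 / q)) fun r hr hne => ?_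
    have := strictMonoOn_rpow_div_self hq0 (hγpos r hr) (mul_pos hc hr) ((hle r hr).lt_of_ne hne)
    linear_combination this
  · refine key (1 / p) 0 fun r hr hne => ?_
    have := strictMonoOn_rpow_div_self hp0 (mul_pos hc hr) (hγpos r hr)
      ((hge r hr).lt_of_ne (Ne.symm hne))
    linear_combination this

theorem ConcaveOn.exists_eqOn_const_mul_of_berwaldPhi_eq {γ : ℝ → ℝ} {p q : ℝ}
    (hconc : ConcaveOn ℝ (Ici 0) γ) (hmono : MonotoneOn γ (Ici 0)) (h0 : 0 ≤ γ 0)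
    (hip : IntegrableOn (fun r => γ r ^ p * exp (-r)) (Ioi 0))
    (hiq : IntegrableOn (fun r => γ r ^ q * exp (-r)) (Ioi 0))
    (hp : -1 < p) (hpq : p < q) (hp0 : p ≠ 0) (hq0 : q ≠ 0)
    (hΦ : berwaldPhi γ p = berwaldPhi γ q) : ∃ c, 0 ≤ c ∧ EqOn γ (c * ·) (Ioi 0) := by
  by_cases hzero : ∀ r ∈ Ioi (0 : ℝ), γ r = 0
  · exact ⟨0, le_rfl, fun r hr => by simp [hzero r hr]⟩
  push Not at hzero
  obtain ⟨s, hs, hγs⟩ := hzero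
  have hγnn : ∀ r ∈ Ioi 0, 0 ≤ γ r := fun r hr =>
    h0.trans (hmono self_mem_Ici (mem_Ici.2 (le_of_lt hr)) (le_of_lt hr))
  have hγpos := hconc.pos_of_pos hmono h0 hs ((hγnn s hs).lt_of_ne' hγs)
  have hq : -1 < q := hp.trans hpq
  have hcpos := berwaldPhi_pos hγpos hq hiq
  refine ⟨berwaldPhi γ q, hcpos.le, hconc.eqOn_const_mul_of_expMoment_eq hmono h0 hcpos hp hpq
    hp0 hq0 hγpos hip hiq ?_ (expMoment_eq_berwaldPhi_rpow hγnn hq hq0)⟩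
  rw [expMoment_eq_berwaldPhi_rpow hγnn hp hp0, hΦ]

theorem berwald_one_dim_equality_case (γ : ℝ → ℝ)
    (hnn : ∀ r ∈ Ici (0:ℝ), 0 ≤ γ r)
    (hmono : MonotoneOn γ (Ici 0))
    (hconc : ConcaveOn ℝ (Ici 0) γ)
    (hint : ∀ p : ℝ, -1 < p → IntegrableOn (fun r => γ r ^ p * Real.exp (-r)) (Ioi 0))
    (p₁ p₂ : ℝ) (hp₁ : -1 < p₁) (hlt : p₁ < p₂) (hp₁0 : p₁ ≠ 0) (hp₂0 : p₂ ≠ 0)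
    (heq : ((1 / Real.Gamma (1 + p₁)) * ∫ r in Ioi (0:ℝ), γ r ^ p₁ * Real.exp (-r)) ^ (1/p₁) =
           ((1 / Real.Gamma (1 + p₂)) * ∫ r in Ioi (0:ℝ), γ r ^ p₂ * Real.exp (-r)) ^ (1/p₂)) :
    (∃ c : ℝ, 0 ≤ c ∧ ∀ r ∈ Ici (0:ℝ), γ r = c * r) ∧
    (∀ p q : ℝ, -1 < p → p ≠ 0 → -1 < q → q ≠ 0 →
      ((1 / Real.Gamma (1 + p)) * ∫ r in Ioi (0:ℝ), γ r ^ p * Real.exp (-r)) ^ (1/p) =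
      ((1 / Real.Gamma (1 + q)) * ∫ r in Ioi (0:ℝ), γ r ^ q * Real.exp (-r)) ^ (1/q)) := by
  have h0 : 0 ≤ γ 0 := hnn 0 self_mem_Ici
  obtain ⟨c, hc, hγc⟩ := hconc.exists_eqOn_const_mul_of_berwaldPhi_eq hmono h0 (hint p₁ hp₁)
    (hint p₂ (hp₁.trans hlt)) hp₁ hlt hp₁0 hp₂0 heq
  have hΦ : ∀ p, -1 < p → p ≠ 0 → berwaldPhi γ p = c := fun p hp hp0 =>
    (berwaldPhi_congr hγc).trans (berwaldPhi_const_mul hc hp hp0)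
  refine ⟨⟨c, hc, fun r (hr : 0 ≤ r) => ?_⟩, fun p q hp hp0 hq hq0 =>
    (hΦ p hp hp0).trans (hΦ q hq hq0).symm⟩
  rcases hr.eq_or_lt with rfl | hr
  · rw [hmono.apply_zero_eq_zero h0 hγc, mul_zero]
  · exact hγc hr
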